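/- Let $U \in \mathbb{R}^{m \times k}$ with $m > k$, let $\widehat{U} = U(\mathbf{s},:)$ be nonsingular, and suppose every entry of $B = U \widehat{U}^{-1}$ satisfies $|b_{ij}| \le 1$. Then $\widehat{U}$ is dominant: for any index set $\mathbf{s}'$ obtained from $\mathbf{s}$ by replacing a single selected row with any other row of $U$, $|\det U(\mathbf{s}',:)| \le |\det \widehat{U}|$. -/
import Mathlib


open Matrix

lemma det_updateRow_one {k : ℕ} (j : Fin k) (v : Fin k → ℝ) :
    ((1 : Matrix (Fin k) (Fin k) ℝ).updateRow j v).det = v j := by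
  rw [← det_transpose, ← updateCol_transpose, transpose_one, ← cramer_apply, cramer_one]
  rfl

/-- MaxVol termination ⇒ dominance: if every entry of `B = U Û⁻¹`
satisfies `|b_{ij}| ≤ 1`, then no single-row swap of the selected set increases the
absolute determinant. -/
theorem maxvol_dominant_of_bounded {m k : ℕ} (hmk : k < m)
    (U : Matrix (Fin m) (Fin k) ℝ)
    (s : Fin k → Fin m) (hs : Function.Injective s)
    (hinv : IsUnit (U.submatrix s id))
    (hB : ∀ (i : Fin m) (j : Fin k), |(U * (U.submatrix s id)⁻¹) i j| ≤ 1) :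
    ∀ (j : Fin k) (i : Fin m),
      |(U.submatrix (Function.update s j i) id).det| ≤ |(U.submatrix s id).det| := by
  intro j i
  set A := U.submatrix s id with hA
  set B := U * A⁻¹ with hBdef
  have hdet : IsUnit A.det := (Matrix.isUnit_iff_isUnit_det A).mp hinv
  have hBA : B * A = U := by
    rw [hBdef, Matrix.mul_assoc, Matrix.nonsing_inv_mul A hdet, Matrix.mul_one]
  -- B.submatrix s id = 1
  have hBs : B.submatrix s id = 1 := by
    have : B.submatrix s id = A * A⁻¹ := by
      ext r c
      simp [hBdef, Matrix.mul_apply, hA, Matrix.submatrix_apply]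
    rw [this, Matrix.mul_nonsing_inv A hdet]
  have hsub : U.submatrix (Function.update s j i) id
      = (B.submatrix (Function.update s j i) id) * A := by
    ext r c
    simp only [Matrix.submatrix_apply, id_eq, ← hBA, Matrix.mul_apply]
  have hupd : B.submatrix (Function.update s j i) id
      = (1 : Matrix (Fin k) (Fin k) ℝ).updateRow j (B i) := by
    ext r c
    by_cases h : r = j
    · subst h
      simp [Matrix.updateRow_self, Matrix.submatrix_apply, Function.update_self]
    · have := congrFun (congrFun hBs r) c
      simp only [Matrix.submatrix_apply, id_eq] at this
      simp [Matrix.updateRow_ne h, Matrix.submatrix_apply, Function.update_of_ne h, this]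
  rw [hsub, Matrix.det_mul, hupd, det_updateRow_one, abs_mul]
  have := hB i j
  calc |B i j| * |A.det| ≤ 1 * |A.det| := by
        exact mul_le_mul_of_nonneg_right this (abs_nonneg _)
    _ = |A.det| := one_mul _
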